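/- If m and n are natural numbers at least one of which is equal to 0 or 1, then the disjunctive sum nim m + nim n is misère-indistinguishable from nim q, where q = m XOR n is the bitwise exclusive-or (Nim-sum) of m and n. -/

import Mathlib

/-!
In misère play an option of `H` that reverses through `G` (it is equivalent to a game having an
option equivalent to `G`) may be deleted: if the remaining options of `H` match those of `G`, then
`H` and `G` are indistinguishable, provided `H` is a misère win when `G` is terminal. The options
of `*1 + *n` are `*0 + *n ≃ *n` and, inductively, `*1 + *k ≃ *(k ^^^ 1)` for `k < n`; these are
heaps `*j` with `j ≠ n ^^^ 1`, covering all `j < n ^^^ 1`, and those above `n ^^^ 1` reverse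
through `*(n ^^^ 1)`. Together with `*0 + G ≃ G` and commutativity this covers all cases.
-/

/-- An impartial game: a position is given by the list of its options
(the positions reachable in one move); both players have the same moves. -/
inductive Game : Type
  | node : List Game → Game

namespace Game

/-- The options of a position. -/
def options : Game → List Game
  | node l => l

/-- Disjunctive sum of two games: a move is made in exactly one component. -/
def add : Game → Game → Game
  | node l, node r =>
      node ((l.attach.map fun x => add x.1 (node r)) ++
            (r.attach.map fun y => add (node l) y.1))
termination_by g h => sizeOf g + sizeOf h
decreasing_by
  · have := List.sizeOf_lt_of_mem x.2; simp_wf; (try simp only [Game.node.sizeOf_spec] at *); omega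
  · have := List.sizeOf_lt_of_mem y.2; simp_wf; (try simp only [Game.node.sizeOf_spec] at *); omega

/-- Misère win (for the player to move): the game has no options,
or some option is a misère loss. -/
def MisereWin : Game → Prop
  | node l => l = [] ∨ ∃ x : {a // a ∈ l}, ¬ MisereWin x.1
decreasing_by
  simp_wf; have := List.sizeOf_lt_of_mem x.2; omega

/-- Misère indistinguishability: adding any game `T` yields the same misère outcome. -/
def Indist (G H : Game) : Prop :=
  ∀ T : Game, MisereWin (add G T) ↔ MisereWin (add H T)

/-- The Nim-heap of size `n`, whose options are `nim 0, …, nim (n-1)`. -/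
def nim : ℕ → Game
  | 0 => node []
  | n + 1 => node ((nim n).options ++ [nim n])

/-- Normal-play win (for the player to move): some option is a normal-play loss.
A player unable to move loses. -/
def NormalWin : Game → Prop
  | node l => ∃ x : {a // a ∈ l}, ¬ NormalWin x.1
decreasing_by
  simp_wf; have := List.sizeOf_lt_of_mem x.2; omega

/-- The Grundy value: the mex of the Grundy values of the options. -/
noncomputable def grundy : Game → ℕ
  | node l => sInf {n : ℕ | ∀ x : {a // a ∈ l}, grundy x.1 ≠ n}
decreasing_by
  simp_wf; have := List.sizeOf_lt_of_mem x.2; omega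

/-- The height of a game: the maximal number of moves in a play from it. -/
def height : Game → ℕ
  | node l => (l.attach.map fun x => height x.1 + 1).foldr max 0
decreasing_by
  simp_wf; have := List.sizeOf_lt_of_mem x.2; omega

/-- A canonical tree: duplicate options are removed, hereditarily. -/
def Canonical : Game → Prop
  | node l => l.Nodup ∧ ∀ x : {a // a ∈ l}, Canonical x.1
decreasing_by
  simp_wf; have := List.sizeOf_lt_of_mem x.2; omega

/-- Extensional (set-theoretic) equality of game trees. -/
def ExtEq : Game → Game → Prop
  | node l, node r =>
      (∀ x : {a // a ∈ l}, ∃ y : {b // b ∈ r}, ExtEq x.1 y.1) ∧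
      (∀ y : {b // b ∈ r}, ∃ x : {a // a ∈ l}, ExtEq x.1 y.1)
termination_by g _ => sizeOf g
decreasing_by
  · have := List.sizeOf_lt_of_mem x.2; simp_wf; (try simp only [Game.node.sizeOf_spec] at *); omega
  · have := List.sizeOf_lt_of_mem x.2; simp_wf; (try simp only [Game.node.sizeOf_spec] at *); omega

/-- The disjunctive sum of `n` copies of a game. -/
def copies : ℕ → Game → Game
  | 0, _ => node []
  | n + 1, g => add g (copies n g)

/-- `G` is a reducer of `H` if `H` is obtained from `G` by adding reversible
moves `R₁, R₂, …`: the options of `H` are those of `G` together with the `Rⱼ`,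
each `Rⱼ` having `G` among its options; when `G` is empty one additionally
requires `H` to be a misère win. -/
def Reducer (G H : Game) : Prop :=
  ∃ Rs : List Game,
    (∀ x, x ∈ H.options ↔ x ∈ G.options ∨ x ∈ Rs) ∧
    (∀ R ∈ Rs, G ∈ R.options) ∧
    (G.options = [] → MisereWin H)

/-- A canonical tree is reduced if its only reducer is itself (as a set of
options) and all of its options are reduced. -/
def Reduced : Game → Prop
  | node l =>
      (∀ G, Reducer G (node l) → ∀ x, x ∈ G.options ↔ x ∈ l) ∧
      ∀ x : {a // a ∈ l}, Reduced x.1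
decreasing_by
  simp_wf; have := List.sizeOf_lt_of_mem x.2; omega

end Game

namespace Game

theorem sizeOf_lt_of_mem_options {x G : Game} (h : x ∈ G.options) : sizeOf x < sizeOf G := by
  cases G with
  | node l =>
    have := List.sizeOf_lt_of_mem (show x ∈ l from h)
    simp only [node.sizeOf_spec]
    omega

theorem options_add (G H : Game) :
    (add G H).options = G.options.map (add · H) ++ H.options.map (add G ·) := by
  cases G; cases H
  rw [add]
  simp [options]

theorem misereWin_iff (G : Game) :
    MisereWin G ↔ G.options = [] ∨ ∃ x ∈ G.options, ¬ MisereWin x := by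
  cases G
  rw [MisereWin]
  simp [options]

theorem misereWin_add_iff (G T : Game) : MisereWin (add G T) ↔
    (G.options = [] ∧ T.options = []) ∨ (∃ x ∈ G.options, ¬ MisereWin (add x T)) ∨
      ∃ t ∈ T.options, ¬ MisereWin (add G t) := by
  rw [misereWin_iff, options_add]
  simp only [List.append_eq_nil_iff, List.map_eq_nil_iff, List.mem_append, List.mem_map]
  grind

theorem misereWin_add_of_options_eq_nil {T : Game} (hT : T.options = []) (G : Game) :
    MisereWin (add G T) ↔ MisereWin G := by
  rw [misereWin_add_iff, misereWin_iff G, hT]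
  have IH (x) (hx : x ∈ G.options) := misereWin_add_of_options_eq_nil hT x
  simp only [and_true, List.not_mem_nil, false_and, exists_false, or_false]
  grind
termination_by sizeOf G
decreasing_by exact sizeOf_lt_of_mem_options hx

namespace Indist

theorem refl (G : Game) : Indist G G := fun _ => Iff.rfl

theorem symm {G H : Game} (h : Indist G H) : Indist H G := fun T => (h T).symm

theorem trans {G H K : Game} (h₁ : Indist G H) (h₂ : Indist H K) : Indist G K :=
  fun T => (h₁ T).trans (h₂ T)

theorem misereWin_iff {G H : Game} (h : Indist G H) : MisereWin G ↔ MisereWin H := by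
  simpa only [misereWin_add_of_options_eq_nil (T := node []) rfl] using h (node [])

end Indist

theorem indist_of_reversible {G H : Game}
    (hGH : ∀ x ∈ G.options, ∃ y ∈ H.options, Indist x y)
    (hHG : ∀ y ∈ H.options,
      (∃ x ∈ G.options, Indist x y) ∨ ∃ R, Indist y R ∧ ∃ z ∈ R.options, Indist z G)
    (hnil : G.options = [] → MisereWin H) : Indist H G := by
  intro T
  have IH (t) (ht : t ∈ T.options) := indist_of_reversible hGH hHG hnil t
  rw [misereWin_add_iff, misereWin_add_iff G]
  constructor
  · rintro (⟨hH, hT⟩ | ⟨y, hy, hyT⟩ | ⟨t, ht, hHt⟩)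
    · refine Or.inl ⟨List.eq_nil_iff_forall_not_mem.2 fun x hx => ?_, hT⟩
      obtain ⟨y, hy, -⟩ := hGH x hx
      simp [hH] at hy
    · obtain ⟨x, hx, hxy⟩ | ⟨R, hyR, z, hz, hzG⟩ := hHG y hy
      · exact Or.inr (Or.inl ⟨x, hx, by rwa [hxy T]⟩)
      · have hzT : MisereWin (add z T) := by
          by_contra hzT
          exact hyT ((hyR T).2 ((misereWin_add_iff R T).2 (Or.inr (Or.inl ⟨z, hz, hzT⟩))))
        exact (misereWin_add_iff G T).1 ((hzG T).1 hzT)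
    · exact Or.inr (Or.inr ⟨t, ht, by rwa [← IH t ht]⟩)
  · rintro (⟨hG, hT⟩ | ⟨x, hx, hxT⟩ | ⟨t, ht, hGt⟩)
    · exact (misereWin_add_iff H T).1 ((misereWin_add_of_options_eq_nil hT H).2 (hnil hG))
    · obtain ⟨y, hy, hxy⟩ := hGH x hx
      exact Or.inr (Or.inl ⟨y, hy, by rwa [← hxy T]⟩)
    · exact Or.inr (Or.inr ⟨t, ht, by rwa [IH t ht]⟩)
termination_by T => sizeOf T
decreasing_by exact sizeOf_lt_of_mem_options ht

theorem indist_of_options_indist {G H : Game}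
    (hGH : ∀ x ∈ G.options, ∃ y ∈ H.options, Indist x y)
    (hHG : ∀ y ∈ H.options, ∃ x ∈ G.options, Indist x y) : Indist G H := by
  refine indist_of_reversible (fun y hy => ?_) (fun x hx => ?_) fun hH => ?_
  · obtain ⟨x, hx, hxy⟩ := hHG y hy
    exact ⟨x, hx, hxy.symm⟩
  · obtain ⟨y, hy, hxy⟩ := hGH x hx
    exact Or.inl ⟨y, hy, hxy.symm⟩
  · have hG : G.options = [] := List.eq_nil_iff_forall_not_mem.2 fun x hx => by
      obtain ⟨y, hy, -⟩ := hGH x hx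
      simp [hH] at hy
    exact (misereWin_iff G).2 (Or.inl hG)

theorem indist_nil_add (G : Game) : Indist (add (node []) G) G := by
  have hopts : (add (node []) G).options = G.options.map (add (node []) ·) := by
    rw [options_add]
    rfl
  apply indist_of_options_indist
  · intro x hx
    rw [hopts, List.mem_map] at hx
    obtain ⟨g, hg, rfl⟩ := hx
    exact ⟨g, hg, indist_nil_add g⟩
  · intro g hg
    exact ⟨_, hopts ▸ List.mem_map_of_mem hg, indist_nil_add g⟩
termination_by sizeOf G
decreasing_by all_goals exact sizeOf_lt_of_mem_options hg

theorem indist_add_comm (G H : Game) : Indist (add G H) (add H G) := by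
  have mem_add {x K L} : x ∈ (add K L).options ↔
      (∃ k ∈ K.options, x = add k L) ∨ ∃ l ∈ L.options, x = add K l := by
    simp [options_add, eq_comm]
  apply indist_of_options_indist
  · intro x hx
    obtain ⟨g, hg, rfl⟩ | ⟨h, hh, rfl⟩ := mem_add.1 hx
    · exact ⟨_, mem_add.2 (Or.inr ⟨g, hg, rfl⟩), indist_add_comm g H⟩
    · exact ⟨_, mem_add.2 (Or.inl ⟨h, hh, rfl⟩), indist_add_comm G h⟩
  · intro y hy
    obtain ⟨h, hh, rfl⟩ | ⟨g, hg, rfl⟩ := mem_add.1 hy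
    · exact ⟨_, mem_add.2 (Or.inr ⟨h, hh, rfl⟩), indist_add_comm G h⟩
    · exact ⟨_, mem_add.2 (Or.inl ⟨g, hg, rfl⟩), indist_add_comm g H⟩
termination_by sizeOf G + sizeOf H
decreasing_by
  all_goals first
    | have := sizeOf_lt_of_mem_options hg; omega
    | have := sizeOf_lt_of_mem_options hh; omega

theorem mem_options_nim {x : Game} {n : ℕ} : x ∈ (nim n).options ↔ ∃ k < n, x = nim k := by
  induction n with
  | zero => simp [nim, options]
  | succ n ih =>
    change x ∈ (nim n).options ++ [nim n] ↔ _
    simp only [List.mem_append, List.mem_singleton, ih, Nat.lt_succ_iff_lt_or_eq, or_and_right,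
      exists_or, exists_eq_left]

theorem nim_mem_options_nim {k n : ℕ} (h : k < n) : nim k ∈ (nim n).options :=
  mem_options_nim.2 ⟨k, h, rfl⟩

theorem not_misereWin_nim_one : ¬ MisereWin (nim 1) := by
  rw [misereWin_iff]
  simp [nim, options, MisereWin]

theorem indist_nim_of_options {H : Game} {q : ℕ}
    (hcover : ∀ j < q, ∃ y ∈ H.options, Indist y (nim j))
    (havoid : ∀ y ∈ H.options, ∃ j ≠ q, Indist y (nim j))
    (hq : q = 0 → MisereWin H) : Indist H (nim q) := by
  refine indist_of_reversible (fun x hx => ?_) (fun y hy => ?_) fun hnil => ?_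
  · obtain ⟨j, hj, rfl⟩ := mem_options_nim.1 hx
    obtain ⟨y, hy, hyj⟩ := hcover j hj
    exact ⟨y, hy, hyj.symm⟩
  · obtain ⟨j, hjq, hyj⟩ := havoid y hy
    rcases hjq.lt_or_gt with hlt | hgt
    · exact Or.inl ⟨nim j, nim_mem_options_nim hlt, hyj.symm⟩
    · exact Or.inr ⟨nim j, hyj, nim q, nim_mem_options_nim hgt, Indist.refl _⟩
  · refine hq (Nat.eq_zero_of_not_pos fun hpos => ?_)
    simpa [hnil] using nim_mem_options_nim hpos

theorem indist_add_nim_one (n : ℕ) : Indist (add (nim 1) (nim n)) (nim (n ^^^ 1)) := by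
  have mem_opts {y} : y ∈ (add (nim 1) (nim n)).options ↔
      y = add (nim 0) (nim n) ∨ ∃ k < n, y = add (nim 1) (nim k) := by
    simp [options_add, mem_options_nim, eq_comm]
  have hzero : Indist (add (nim 0) (nim n)) (nim n) := indist_nil_add _
  have IH (k) (hk : k < n) : Indist (add (nim 1) (nim k)) (nim (k ^^^ 1)) := indist_add_nim_one k
  apply indist_nim_of_options
  · intro j hj
    rcases Nat.lt_xor_cases hj with h | h
    · refine ⟨_, mem_opts.2 (Or.inr ⟨_, h, rfl⟩), ?_⟩
      simpa [xor_cancel_right] using IH _ h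
    · obtain rfl : j = n := by simpa using h
      exact ⟨_, mem_opts.2 (Or.inl rfl), hzero⟩
  · intro y hy
    obtain rfl | ⟨k, hk, rfl⟩ := mem_opts.1 hy
    · exact ⟨n, (by simp : n ^^^ 1 ≠ n).symm, hzero⟩
    · exact ⟨k ^^^ 1, (xor_left_involutive 1).injective.ne hk.ne, IH k hk⟩
  · intro hq
    obtain rfl : n = 1 := by simpa using hq
    rw [misereWin_iff]
    exact Or.inr ⟨_, mem_opts.2 (Or.inl rfl), hzero.misereWin_iff.not.2 not_misereWin_nim_one⟩

end Game

open Game in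
/-- If at least one of `m`, `n` is `0` or `1`, then
`nim m + nim n` is misère-indistinguishable from `nim (m XOR n)`. -/
theorem stmt3 (m n : ℕ) (h : m = 0 ∨ m = 1 ∨ n = 0 ∨ n = 1) :
    Indist (add (nim m) (nim n)) (nim (m ^^^ n)) := by
  rcases h with rfl | rfl | rfl | rfl
  · rw [Nat.zero_xor]
    exact indist_nil_add (nim n)
  · simpa [Nat.xor_comm] using indist_add_nim_one n
  · exact (indist_add_comm _ _).trans (by rw [Nat.xor_zero]; exact indist_nil_add (nim m))
  · exact (indist_add_comm _ _).trans (indist_add_nim_one m)
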